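/- Let ρ, c, k, ℓ, γ, D∞ be positive reals, α = k/(ρc), 0 < ε < 1, and let h₀* = (1/D∞)√(γ(1-ε)ρℓk/2). For each h₀ > h₀* let ξ(h₀) > 0 be the unique solution of (D∞c/(ℓ√π))·exp(-x²)/(k/(h₀√(πα)) + erf(x)) = x + (γ(1-ε)√π/(2D∞))·(k/(h₀√(πα)) + erf(x))·exp(x²), and let μ(h₀) = ξ(h₀) + (γk/(2D∞h₀√α))·exp(ξ(h₀)²)·[1 + (h₀√(πα)/k)·erf(ξ(h₀))]. Let ξ∞ > 0 be the unique solution of (G∞(x)/F∞(x)) = D∞c/(ℓ√π) with F∞(x) = exp(-x²)/erf(x) and G∞(x) = x + (γ(1-ε)√π/(2D∞))·(1/F∞(x)), and let μ∞ = ξ∞ + (γ√π/(2D∞))·exp(ξ∞²)·erf(ξ∞). Then ξ(h₀) → ξ∞ and μ(h₀) → μ∞ as h₀ → +∞. -/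

import Mathlib

/-!
Clearing denominators, `ξ(h₀)` is a positive zero of `x ↦ stefanResidual A B (λ h₀) x` and `ξ∞`
one of `x ↦ stefanResidual A B 0 x`, where `A = D∞c/(ℓ√π)`, `B = γ(1-ε)√π/(2D∞)` and
`λ h₀ = k/(h₀√(πα)) → 0`. The residual is strictly decreasing in `x > 0` and decreasing in
`λ ≥ 0`. Hence `ξ(h₀) ≤ ξ∞`, and for `x₀ < ξ∞` the residual at `(0, x₀)` is positive, so by
continuity in `λ` it stays positive at `(λ h₀, x₀)` for large `h₀`, forcing `x₀ < ξ(h₀)`.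
Finally `μ(h₀) = ξ(h₀) + O(1/h₀) + (γ√π/(2D∞)) exp(ξ(h₀)²) erf ξ(h₀)`.
-/

open Real Filter Set Topology

/-- The error function `erf x = (2/√π) ∫₀ˣ exp(-t²) dt`. -/
noncomputable def erf (x : ℝ) : ℝ := (2 / Real.sqrt π) * ∫ t in (0:ℝ)..x, Real.exp (-t ^ 2)

theorem hasDerivAt_erf (x : ℝ) : HasDerivAt erf (2 / √π * exp (-x ^ 2)) x :=
  ((continuous_exp.comp (continuous_pow 2).neg).integral_hasStrictDerivAt 0 x).hasDerivAt.const_mul _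

theorem continuous_erf : Continuous erf :=
  continuous_iff_continuousAt.2 fun x => (hasDerivAt_erf x).continuousAt

theorem erf_strictMono : StrictMono erf :=
  strictMono_of_hasDerivAt_pos hasDerivAt_erf fun _ => by positivity

theorem erf_zero : erf 0 = 0 := by simp [erf]

theorem erf_pos {x : ℝ} (hx : 0 < x) : 0 < erf x :=
  erf_zero ▸ erf_strictMono hx

theorem tendsto_of_eq_zero_of_strictAntiOn {ι : Type*} {L : Filter ι} {F : ℝ → ℝ → ℝ}
    {lam ξ : ι → ℝ} {x₀ : ℝ}
    (hanti : ∀ l, 0 ≤ l → StrictAntiOn (F l) (Ioi 0))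
    (hmono : ∀ x, 0 < x → AntitoneOn (fun l => F l x) (Ici 0))
    (hcont : ∀ x, 0 < x → ContinuousAt (fun l => F l x) 0)
    (hlam : Tendsto lam L (𝓝 0)) (hlam0 : ∀ᶠ i in L, 0 ≤ lam i)
    (hξ : ∀ᶠ i in L, 0 < ξ i ∧ F (lam i) (ξ i) = 0) (hx₀ : 0 < x₀) (h0 : F 0 x₀ = 0) :
    Tendsto ξ L (𝓝 x₀) := by
  rw [tendsto_order]
  constructor
  · intro a ha
    set b := max a (x₀ / 2)
    have hb : 0 < b := lt_max_of_lt_right (by linarith)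
    have hbx₀ : b < x₀ := max_lt ha (by linarith)
    have hFb : 0 < F 0 b := by
      have := hanti 0 le_rfl hb hx₀ hbx₀
      rwa [h0] at this
    filter_upwards [hlam0, hξ, hlam.eventually ((hcont b hb).eventually (eventually_gt_nhds hFb))]
      with i hl ⟨hξi, hFξ⟩ hFb'
    have : b < ξ i := ((hanti _ hl).lt_iff_gt hξi hb).1 (by rwa [hFξ])
    exact (le_max_left _ _).trans_lt this
  · intro a ha
    filter_upwards [hlam0, hξ] with i hl ⟨hξi, hFξ⟩
    refine lt_of_le_of_lt (((hanti _ hl).le_iff_ge hx₀ hξi).1 ?_) ha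
    calc F (lam i) x₀ ≤ F 0 x₀ := hmono x₀ hx₀ self_mem_Ici hl hl
      _ = F (lam i) (ξ i) := by rw [h0, hFξ]

noncomputable def stefanResidual (A B l x : ℝ) : ℝ :=
  A * exp (-x ^ 2) - (l + erf x) * (x + B * (l + erf x) * exp (x ^ 2))

section stefanResidual

variable {A B : ℝ}

theorem stefanResidual_strictAntiOn (hA : 0 ≤ A) (hB : 0 ≤ B) {l : ℝ} (hl : 0 ≤ l) :
    StrictAntiOn (stefanResidual A B l) (Ioi 0) := by
  intro x (hx : 0 < x) y (hy : 0 < y) hxy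
  have herf : erf x < erf y := erf_strictMono hxy
  have hexp : exp (x ^ 2) < exp (y ^ 2) := exp_lt_exp.2 (by nlinarith)
  have hexp' : exp (-y ^ 2) ≤ exp (-x ^ 2) := exp_le_exp.2 (by nlinarith)
  have hlerf : 0 < l + erf x := by linarith [erf_pos hx]
  have hfactor : x + B * (l + erf x) * exp (x ^ 2) < y + B * (l + erf y) * exp (y ^ 2) := by
    have : B * (l + erf x) * exp (x ^ 2) ≤ B * (l + erf y) * exp (y ^ 2) := by
      gcongr
      exact mul_nonneg hB (by linarith)
    linarith
  have : (l + erf x) * (x + B * (l + erf x) * exp (x ^ 2)) <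
      (l + erf y) * (y + B * (l + erf y) * exp (y ^ 2)) :=
    mul_lt_mul'' (by linarith) hfactor hlerf.le (by positivity)
  unfold stefanResidual
  nlinarith [mul_le_mul_of_nonneg_left hexp' hA]

theorem stefanResidual_antitoneOn_param (hB : 0 ≤ B) {x : ℝ} (hx : 0 < x) :
    AntitoneOn (fun l => stefanResidual A B l x) (Ici 0) := by
  intro l (hl : 0 ≤ l) m (_ : 0 ≤ m) hlm
  have hlerf : 0 < l + erf x := by linarith [erf_pos hx]
  have : (l + erf x) * (x + B * (l + erf x) * exp (x ^ 2)) ≤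
      (m + erf x) * (x + B * (m + erf x) * exp (x ^ 2)) := by
    gcongr
    linarith
  unfold stefanResidual
  linarith

theorem continuous_stefanResidual_param (x : ℝ) :
    Continuous (fun l => stefanResidual A B l x) := by
  unfold stefanResidual
  fun_prop

theorem stefanResidual_eq_zero {l x : ℝ} (hd : l + erf x ≠ 0)
    (h : A * exp (-x ^ 2) / (l + erf x) = x + B * (l + erf x) * exp (x ^ 2)) :
    stefanResidual A B l x = 0 := by
  rw [div_eq_iff hd] at h
  unfold stefanResidual
  linear_combination h

theorem stefanResidual_zero_eq_zero {x : ℝ} (hx : 0 < x)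
    (h : (x + B * (erf x / exp (-x ^ 2))) / (exp (-x ^ 2) / erf x) = A) :
    stefanResidual A B 0 x = 0 := by
  have herf := erf_pos hx
  have hexp : exp (-x ^ 2) * exp (x ^ 2) = 1 := by rw [← exp_add]; simp
  field_simp at h
  unfold stefanResidual
  linear_combination (-exp (x ^ 2)) * h + (x * erf x - A * exp (-x ^ 2)) * hexp

end stefanResidual

theorem tendsto_liquidFrontCoeff {ξ : ℝ → ℝ} {ξinf : ℝ} (hξ : Tendsto ξ atTop (𝓝 ξinf))
    (C E : ℝ) :
    Tendsto (fun h₀ => ξ h₀ + C * h₀⁻¹ * exp (ξ h₀ ^ 2) + E * exp (ξ h₀ ^ 2) * erf (ξ h₀)) atTop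
      (𝓝 (ξinf + E * exp (ξinf ^ 2) * erf ξinf)) := by
  have hexp : Tendsto (fun h₀ => exp (ξ h₀ ^ 2)) atTop (𝓝 (exp (ξinf ^ 2))) :=
    ((continuous_exp.comp (continuous_pow 2)).tendsto _).comp hξ
  have hlim := (hξ.add ((tendsto_inv_atTop_zero.const_mul C).mul hexp)).add
    ((hexp.const_mul E).mul ((continuous_erf.tendsto _).comp hξ))
  rwa [mul_zero, zero_mul, add_zero] at hlim

theorem stmt_9_general (ρ c k ℓ γ Dinf α ε h₀star : ℝ)
    (hρ : 0 < ρ) (hc : 0 < c) (hk : 0 < k) (hℓ : 0 < ℓ) (hγ : 0 < γ) (hD : 0 < Dinf)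
    (hα : α = k / (ρ * c)) (hε1 : ε < 1)
    (ξ μ : ℝ → ℝ) (ξinf μinf : ℝ)
    -- for each `h₀ > h₀*`, `ξ h₀` is the unique positive solution of the convective equation
    (hξpos : ∀ h₀ > h₀star, 0 < ξ h₀)
    (hξeq : ∀ h₀ > h₀star,
      (Dinf * c / (ℓ * Real.sqrt π)) * Real.exp (-(ξ h₀) ^ 2) /
          (k / (h₀ * Real.sqrt (π * α)) + erf (ξ h₀)) =
        ξ h₀ + (γ * (1 - ε) * Real.sqrt π / (2 * Dinf)) *
          (k / (h₀ * Real.sqrt (π * α)) + erf (ξ h₀)) * Real.exp ((ξ h₀) ^ 2))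
    (hμ : ∀ h₀ > h₀star, μ h₀ = ξ h₀ + (γ * k / (2 * Dinf * h₀ * Real.sqrt α)) *
      Real.exp ((ξ h₀) ^ 2) * (1 + (h₀ * Real.sqrt (π * α) / k) * erf (ξ h₀)))
    -- `ξ∞` is the unique positive solution of the limit equation `G∞(x)/F∞(x) = D∞c/(ℓ√π)`
    (hξinfpos : 0 < ξinf)
    (hξinfeq : (ξinf + (γ * (1 - ε) * Real.sqrt π / (2 * Dinf)) *
        (erf ξinf / Real.exp (-ξinf ^ 2))) / (Real.exp (-ξinf ^ 2) / erf ξinf) =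
      Dinf * c / (ℓ * Real.sqrt π))
    (hμinf : μinf = ξinf + (γ * Real.sqrt π / (2 * Dinf)) * Real.exp (ξinf ^ 2) * erf ξinf) :
    Tendsto ξ atTop (nhds ξinf) ∧ Tendsto μ atTop (nhds μinf) := by
  have hα0 : 0 < α := hα ▸ by positivity
  have hB : 0 ≤ γ * (1 - ε) * √π / (2 * Dinf) := by
    have : 0 < 1 - ε := sub_pos.2 hε1
    positivity
  have hlarge : ∀ᶠ h₀ in atTop, h₀star < h₀ ∧ 0 < h₀ :=
    (eventually_gt_atTop _).and (eventually_gt_atTop 0)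
  have hlam : Tendsto (fun h₀ => k / (h₀ * √(π * α))) atTop (𝓝 0) := by
    have := tendsto_inv_atTop_zero.const_mul (k / √(π * α))
    rw [mul_zero] at this
    exact this.congr fun h₀ => by ring
  have hzero : ∀ᶠ h₀ in atTop, 0 < ξ h₀ ∧ stefanResidual (Dinf * c / (ℓ * √π))
      (γ * (1 - ε) * √π / (2 * Dinf)) (k / (h₀ * √(π * α))) (ξ h₀) = 0 := by
    filter_upwards [hlarge] with h₀ ⟨hh, hh0⟩
    have := erf_pos (hξpos h₀ hh)
    exact ⟨hξpos h₀ hh, stefanResidual_eq_zero (by positivity) (hξeq h₀ hh)⟩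
  have hξ : Tendsto ξ atTop (𝓝 ξinf) :=
    tendsto_of_eq_zero_of_strictAntiOn (fun _ => stefanResidual_strictAntiOn (by positivity) hB)
      (fun _ => stefanResidual_antitoneOn_param hB)
      (fun x _ => (continuous_stefanResidual_param x).continuousAt) hlam
      ((eventually_gt_atTop 0).mono fun _ _ => by positivity) hzero hξinfpos
      (stefanResidual_zero_eq_zero hξinfpos hξinfeq)
  refine ⟨hξ, hμinf ▸ (tendsto_liquidFrontCoeff hξ (γ * k / (2 * Dinf * √α)) _).congr' ?_⟩
  filter_upwards [hlarge] with h₀ ⟨hh, hh0⟩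
  rw [hμ h₀ hh, sqrt_mul pi_pos.le]
  field_simp
  ring

/-- As `h₀ → +∞`, the interface coefficients `ξ(h₀)` and `μ(h₀)` of the convective
problem converge to the coefficients `ξ∞` and `μ∞` of the problem with prescribed
temperature `-D∞` at the fixed face. -/
theorem stmt_9 (ρ c k ℓ γ Dinf α ε h₀star : ℝ)
    (hρ : 0 < ρ) (hc : 0 < c) (hk : 0 < k) (hℓ : 0 < ℓ) (hγ : 0 < γ) (hD : 0 < Dinf)
    (hα : α = k / (ρ * c)) (hε0 : 0 < ε) (hε1 : ε < 1)
    (hstar : h₀star = (1 / Dinf) * Real.sqrt (γ * (1 - ε) * ρ * ℓ * k / 2))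
    (ξ μ : ℝ → ℝ) (ξinf μinf : ℝ)
    -- for each `h₀ > h₀*`, `ξ h₀` is the unique positive solution of the convective equation
    (hξpos : ∀ h₀ > h₀star, 0 < ξ h₀)
    (hξeq : ∀ h₀ > h₀star,
      (Dinf * c / (ℓ * Real.sqrt π)) * Real.exp (-(ξ h₀) ^ 2) /
          (k / (h₀ * Real.sqrt (π * α)) + erf (ξ h₀)) =
        ξ h₀ + (γ * (1 - ε) * Real.sqrt π / (2 * Dinf)) *
          (k / (h₀ * Real.sqrt (π * α)) + erf (ξ h₀)) * Real.exp ((ξ h₀) ^ 2))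
    (hξuniq : ∀ h₀ > h₀star, ∀ y > (0:ℝ),
      (Dinf * c / (ℓ * Real.sqrt π)) * Real.exp (-y ^ 2) /
          (k / (h₀ * Real.sqrt (π * α)) + erf y) =
        y + (γ * (1 - ε) * Real.sqrt π / (2 * Dinf)) *
          (k / (h₀ * Real.sqrt (π * α)) + erf y) * Real.exp (y ^ 2) → y = ξ h₀)
    (hμ : ∀ h₀ > h₀star, μ h₀ = ξ h₀ + (γ * k / (2 * Dinf * h₀ * Real.sqrt α)) *
      Real.exp ((ξ h₀) ^ 2) * (1 + (h₀ * Real.sqrt (π * α) / k) * erf (ξ h₀)))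
    -- `ξ∞` is the unique positive solution of the limit equation `G∞(x)/F∞(x) = D∞c/(ℓ√π)`
    (hξinfpos : 0 < ξinf)
    (hξinfeq : (ξinf + (γ * (1 - ε) * Real.sqrt π / (2 * Dinf)) *
        (erf ξinf / Real.exp (-ξinf ^ 2))) / (Real.exp (-ξinf ^ 2) / erf ξinf) =
      Dinf * c / (ℓ * Real.sqrt π))
    (hξinfuniq : ∀ y > (0:ℝ),
      (y + (γ * (1 - ε) * Real.sqrt π / (2 * Dinf)) *
          (erf y / Real.exp (-y ^ 2))) / (Real.exp (-y ^ 2) / erf y) =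
        Dinf * c / (ℓ * Real.sqrt π) → y = ξinf)
    (hμinf : μinf = ξinf + (γ * Real.sqrt π / (2 * Dinf)) * Real.exp (ξinf ^ 2) * erf ξinf) :
    Tendsto ξ atTop (nhds ξinf) ∧ Tendsto μ atTop (nhds μinf) :=
  stmt_9_general ρ c k ℓ γ Dinf α ε h₀star hρ hc hk hℓ hγ hD hα hε1 ξ μ ξinf μinf hξpos hξeq hμ
    hξinfpos hξinfeq hμinf
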